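/- arXiv:2106.00548 — 6 statements merged into one kernel-verified Lean document; each statement's English description precedes it below -/
import Mathlib

section
/- Let V be a real Hilbert space with inner product a(·,·) and let b(·,·) be another positive definite symmetric bilinear form on V, bounded with respect to a. Let T : V → V be the bounded operator defined by a(Tf, v) = b(f, v) for all v ∈ V. Let V_h ⊆ V be a closed subspace with a-orthogonal projection P_h, and define η = sup over f with ‖f‖_b = 1 of ‖(I − P_h) T f‖_a. Then for every u ∈ V, ‖(I − P_h) u‖_b ≤ η ‖(I − P_h) u‖_a, where ‖·‖_a and ‖·‖_b are the norms induced by a and b. -/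
/-!
Aubin–Nitsche duality. For `e = (I - P_h) u` we have `e ⊥ V_h`, hence
`‖e‖_b² = a(Te, e) = a((I - P_h) Te, e) ≤ ‖(I - P_h) Te‖_a ‖e‖_a ≤ η ‖e‖_b ‖e‖_a`.
The supremum `η` is finite because `T` is symmetric, hence bounded (Hellinger–Toeplitz), and
Cauchy–Schwarz for `b` gives `‖Tf‖_a² ≤ ‖T‖ ‖f‖_b²`.
-/

open RealInnerProductSpace

theorem le_sSup_image_level_one_mul {E : Type*} [AddCommGroup E] [Module ℝ E] {p q : E → ℝ}
    (hp : ∀ (c : ℝ) x, 0 < c → p (c • x) = c * p x)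
    (hq : ∀ (c : ℝ) x, 0 < c → q (c • x) = c * q x)
    (hp_nonneg : ∀ x, 0 ≤ p x) {C : ℝ} (hC : ∀ x, q x ≤ C * p x) (x : E) :
    q x ≤ sSup (q '' {y | p y = 1}) * p x := by
  rcases (hp_nonneg x).eq_or_lt with hpx | hpx
  · simpa [← hpx] using hC x
  set y := (p x)⁻¹ • x
  have hy : p y = 1 := by rw [hp _ _ (inv_pos.2 hpx), inv_mul_cancel₀ hpx.ne']
  have hbdd : BddAbove (q '' {y | p y = 1}) := by
    refine ⟨C, ?_⟩
    rintro _ ⟨z, hz : p z = 1, rfl⟩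
    simpa [hz] using hC z
  have hqy : q y ≤ sSup (q '' {y | p y = 1}) := le_csSup hbdd ⟨y, hy, rfl⟩
  have hxy : x = p x • y := by rw [smul_inv_smul₀ hpx.ne']
  rw [hxy, hq _ _ hpx, hp _ _ hpx, hy, mul_one, mul_comm]
  exact mul_le_mul_of_nonneg_right hqy hpx.le

section

variable {V : Type*} [NormedAddCommGroup V] [InnerProductSpace ℝ V]
  {b : LinearMap.BilinForm ℝ V} {T : V →ₗ[ℝ] V}

theorem LinearMap.isSymmetric_of_inner_apply_eq (hbsymm : ∀ x y, b x y = b y x)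
    (hT : ∀ f v, ⟪T f, v⟫ = b f v) : T.IsSymmetric := fun x y => by
  rw [hT, real_inner_comm, hT, hbsymm]

theorem exists_norm_apply_le_mul_sqrt_apply_self [CompleteSpace V]
    (hbsymm : ∀ x y, b x y = b y x) (hb_nonneg : ∀ x, 0 ≤ b x x)
    (hT : ∀ f v, ⟪T f, v⟫ = b f v) : ∃ C, ∀ f, ‖T f‖ ≤ C * √(b f f) := by
  set T' : V →L[ℝ] V := ⟨T, (LinearMap.isSymmetric_of_inner_apply_eq hbsymm hT).continuous⟩
  refine ⟨√‖T'‖, fun f => ?_⟩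
  have hnorm_sq : ‖T f‖ ^ 2 = b f (T f) := by rw [← hT, real_inner_self_eq_norm_sq]
  have hTT : b (T f) (T f) ≤ ‖T'‖ * ‖T f‖ ^ 2 := calc
    b (T f) (T f) = ⟪T' (T f), T f⟫ := (hT _ _).symm
    _ ≤ ‖T' (T f)‖ * ‖T f‖ := real_inner_le_norm _ _
    _ ≤ ‖T'‖ * ‖T f‖ * ‖T f‖ := by gcongr; exact T'.le_opNorm _
    _ = ‖T'‖ * ‖T f‖ ^ 2 := by ring
  have hcs : b f (T f) * b (T f) f ≤ b f f * b (T f) (T f) :=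
    b.apply_mul_apply_le_of_forall_zero_le hb_nonneg f (T f)
  rw [hbsymm (T f) f, ← hnorm_sq] at hcs
  have hsq : ‖T f‖ ^ 2 ≤ ‖T'‖ * b f f := by
    nlinarith [mul_le_mul_of_nonneg_left hTT (hb_nonneg f), sq_nonneg ‖T f‖,
      mul_nonneg (norm_nonneg T') (hb_nonneg f)]
  rw [← Real.sqrt_mul (norm_nonneg _), ← Real.sqrt_sq (norm_nonneg (T f))]
  exact Real.sqrt_le_sqrt hsq

theorem apply_self_le_norm_starProjection_mul_norm (hT : ∀ f v, ⟪T f, v⟫ = b f v)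
    (K : Submodule ℝ V) [K.HasOrthogonalProjection] {e : V} (he : e ∈ K) :
    b e e ≤ ‖K.starProjection (T e)‖ * ‖e‖ := calc
  b e e = ⟪T e, K.starProjection e⟫ := by rw [K.starProjection_eq_self_iff.2 he, hT]
  _ = ⟪K.starProjection (T e), e⟫ := (K.inner_starProjection_left_eq_right _ _).symm
  _ ≤ ‖K.starProjection (T e)‖ * ‖e‖ := real_inner_le_norm _ _

end

theorem stmt_3_general {V : Type*} [NormedAddCommGroup V] [InnerProductSpace ℝ V] [CompleteSpace V]
    (b : LinearMap.BilinForm ℝ V)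
    (hbsymm : ∀ x y, b x y = b y x) (hbpos : ∀ x, x ≠ 0 → 0 < b x x)
    (T : V →ₗ[ℝ] V) (hT : ∀ f v, ⟪T f, v⟫ = b f v)
    (Vh : Submodule ℝ V) [CompleteSpace Vh] :
    ∀ u : V,
      Real.sqrt (b (u - (Submodule.orthogonalProjectionOnto Vh u : V)) (u - (Submodule.orthogonalProjectionOnto Vh u : V)))
        ≤ sSup ((fun f => ‖T f - (Submodule.orthogonalProjectionOnto Vh (T f) : V)‖) ''
            {f : V | Real.sqrt (b f f) = 1})
          * ‖u - (Submodule.orthogonalProjectionOnto Vh u : V)‖ := by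
  intro u
  have hb_nonneg (x : V) : 0 ≤ b x x := by
    rcases eq_or_ne x 0 with rfl | hx
    exacts [by simp, (hbpos x hx).le]
  simp only [← Submodule.starProjection_apply, ← Submodule.starProjection_orthogonal_val]
  set Q := Vhᗮ.starProjection
  set e := Q u
  set η := sSup ((fun f => ‖Q (T f)‖) '' {f : V | √(b f f) = 1})
  have hη_nonneg : 0 ≤ η := Real.sSup_nonneg (by rintro _ ⟨f, -, rfl⟩; exact norm_nonneg _)
  have hTe : ‖Q (T e)‖ ≤ η * √(b e e) := by
    obtain ⟨C, hC⟩ := exists_norm_apply_le_mul_sqrt_apply_self hbsymm hb_nonneg hT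
    refine le_sSup_image_level_one_mul (p := fun f => √(b f f)) (q := fun f => ‖Q (T f)‖)
      (fun c x hc => ?_) (fun c x hc => ?_) (fun x => Real.sqrt_nonneg _)
      (fun x => (Vhᗮ.norm_starProjection_apply_le _).trans (hC x)) e
    · simp only [map_smul, LinearMap.smul_apply, smul_eq_mul, ← mul_assoc]
      rw [Real.sqrt_mul (mul_self_nonneg c), Real.sqrt_mul_self hc.le]
    · simp only [map_smul, norm_smul, Real.norm_of_nonneg hc.le]
  have hsq : √(b e e) ^ 2 ≤ √(b e e) * (η * ‖e‖) := calc
    √(b e e) ^ 2 = b e e := Real.sq_sqrt (hb_nonneg e)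
    _ ≤ ‖Q (T e)‖ * ‖e‖ :=
      apply_self_le_norm_starProjection_mul_norm hT Vhᗮ (Vhᗮ.starProjection_apply_mem u)
    _ ≤ η * √(b e e) * ‖e‖ := by gcongr
    _ = √(b e e) * (η * ‖e‖) := by ring
  nlinarith [Real.sqrt_nonneg (b e e), mul_nonneg hη_nonneg (norm_nonneg e)]

/-- duality (Aubin–Nitsche) estimate: with `T` the solution operator of
`a(Tf, v) = b(f, v)`, `Ph` the a-orthogonal projection onto a closed subspace `Vh`,
and `η = sup_{‖f‖_b = 1} ‖(I − Ph) T f‖_a`, every `u ∈ V` satisfies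
`‖(I − Ph) u‖_b ≤ η ‖(I − Ph) u‖_a`. -/
theorem stmt_3 {V : Type*} [NormedAddCommGroup V] [InnerProductSpace ℝ V] [CompleteSpace V]
    (b : LinearMap.BilinForm ℝ V)
    (hbsymm : ∀ x y, b x y = b y x) (hbpos : ∀ x, x ≠ 0 → 0 < b x x)
    (hbdd : ∃ C : ℝ, ∀ x y, b x y ≤ C * ‖x‖ * ‖y‖)
    (T : V →ₗ[ℝ] V) (hT : ∀ f v, ⟪T f, v⟫ = b f v)
    (Vh : Submodule ℝ V) [CompleteSpace Vh] :
    ∀ u : V,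
      Real.sqrt (b (u - (Submodule.orthogonalProjectionOnto Vh u : V)) (u - (Submodule.orthogonalProjectionOnto Vh u : V)))
        ≤ sSup ((fun f => ‖T f - (Submodule.orthogonalProjectionOnto Vh (T f) : V)‖) ''
            {f : V | Real.sqrt (b f f) = 1})
          * ‖u - (Submodule.orthogonalProjectionOnto Vh u : V)‖ :=
  stmt_3_general b hbsymm hbpos T hT Vh
end

section
/- Under the setting of the spectral expansion (I − E_k) P_h u = Σ_{j=k+1}^{N} α_j ū_j with α_j = b(u − P_h u, ū_j)/(μ − μ̄_j), μ = 1/λ, μ̄_j = 1/λ̄_j, assume δ := min_{k < j ≤ N} |μ̄_j − μ| > 0. Then ‖(I − E_k) P_h u‖_a² ≤ (μ̄_{k+1}/δ²) ‖u − P_h u‖_b², where ‖v‖_a² = a(v,v) and ‖v‖_b² = b(v,v). -/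
/-- with `δ = min_{k < j ≤ N} |μ̄_j − μ| > 0` one has
`‖(I − E_k) P_h u‖_a² ≤ (μ̄_{k+1}/δ²) ‖u − P_h u‖_b²`. -/
theorem stmt_5 {V : Type*} [AddCommGroup V] [Module ℝ V]
    (a b : LinearMap.BilinForm ℝ V)
    (hasymm : ∀ x y, a x y = a y x) (hbsymm : ∀ x y, b x y = b y x)
    (hapos : ∀ x, x ≠ 0 → 0 < a x x) (hbpos : ∀ x, x ≠ 0 → 0 < b x x)
    (N : ℕ) (Vh : Submodule ℝ V) (hdim : Module.finrank ℝ Vh = N)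
    (lamb : Fin N → ℝ) (ub : Fin N → V) (hmem : ∀ j, ub j ∈ Vh)
    (hpos : ∀ j, 0 < lamb j) (hmono : Monotone lamb)
    (heig : ∀ j, ∀ v ∈ Vh, a (ub j) v = lamb j * b (ub j) v)
    (horth : ∀ i j, a (ub i) (ub j) = if i = j then 1 else 0)
    (Ph : V →ₗ[ℝ] V) (hPmem : ∀ w, Ph w ∈ Vh)
    (hPproj : ∀ w, ∀ vh ∈ Vh, a (Ph w) vh = a w vh)
    (k : ℕ) (hk : k < N)
    (Ek : V →ₗ[ℝ] V)
    (hEmem : ∀ w, Ek w ∈ Submodule.span ℝ (Set.range fun j : {j : Fin N // (j : ℕ) < k} => ub j))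
    (hEproj : ∀ w, ∀ j : Fin N, (j : ℕ) < k → a (Ek w) (ub j) = a w (ub j))
    (lam : ℝ) (hlam : 0 < lam) (u : V) (hu : ∀ v, a u v = lam * b u v)
    (δ : ℝ)
    (hδdef : δ = (Finset.univ.filter (fun j : Fin N => k ≤ (j : ℕ))).inf'
        ⟨⟨k, hk⟩, by simp⟩ (fun j => |1 / lamb j - 1 / lam|))
    (hδpos : 0 < δ) :
    a (Ph u - Ek (Ph u)) (Ph u - Ek (Ph u)) ≤
      (1 / lamb ⟨k, hk⟩) / δ ^ 2 * b (u - Ph u) (u - Ph u) := by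
  classical
  set K : Fin N := ⟨k, hk⟩ with hK
  set s : Finset (Fin N) := Finset.univ.filter (fun j : Fin N => k ≤ (j : ℕ)) with hs
  set w : V := Ph u - Ek (Ph u) with hw
  set v : V := u - Ph u with hv
  set α : Fin N → ℝ := fun j => a (Ph u) (ub j) with hα
  set β : Fin N → ℝ := fun j => b (u - Ph u) (ub j) with hβ
  -- b-orthogonality
  have hborth : ∀ i j, b (ub i) (ub j) = if i = j then 1 / lamb i else 0 := by
    intro i j
    have h1 := heig i (ub j) (hmem j)
    have h2 := horth i j
    rw [h1] at h2
    rcases eq_or_ne i j with h | h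
    · subst h
      rw [if_pos rfl] at h2
      rw [if_pos rfl, eq_div_iff (hpos i).ne']
      linarith
    · simp only [if_neg h] at h2 ⊢
      rcases mul_eq_zero.mp h2 with h' | h'
      · exact absurd h' (hpos i).ne'
      · exact h'
  -- b nonneg
  have hb0 : ∀ x, 0 ≤ b x x := by
    intro x
    rcases eq_or_ne x 0 with h | h
    · simp [h]
    · exact (hbpos x h).le
  -- linear independence of ub
  have hLI : LinearIndependent ℝ ub := by
    rw [Fintype.linearIndependent_iff]
    intro g hg i
    have : a (∑ j, g j • ub j) (ub i) = 0 := by rw [hg]; simp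
    simpa [LinearMap.map_sum₂, LinearMap.map_smul₂, horth, Finset.sum_ite_eq',
      smul_eq_mul] using this
  -- the expansion operator
  set T : V →ₗ[ℝ] V := ∑ j : Fin N, (a.flip (ub j)).smulRight (ub j) with hT
  have hTapply : ∀ x, T x = ∑ j, a x (ub j) • ub j := by
    intro x
    simp [hT, LinearMap.sum_apply, LinearMap.smulRight_apply, LinearMap.flip_apply]
  have hTub : ∀ i, T (ub i) = ub i := by
    intro i
    rw [hTapply]
    simp [horth, Finset.sum_ite_eq', ite_smul]
  -- spanning : every element of Vh is in span of ub
  have hVh_le : Vh ≤ Submodule.span ℝ (Set.range ub) := by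
    have : Nonempty (Fin N) := ⟨K⟩
    set ub' : Fin N → Vh := fun j => ⟨ub j, hmem j⟩ with hub'
    have hLI' : LinearIndependent ℝ ub' := by
      have hcomp : Vh.subtype ∘ ub' = ub := rfl
      exact LinearIndependent.of_comp Vh.subtype (by rw [hcomp]; exact hLI)
    have hsp : Submodule.span ℝ (Set.range ub') = ⊤ :=
      hLI'.span_eq_top_of_card_eq_finrank (by simp [hdim])
    intro x hx
    have hx' : (⟨x, hx⟩ : Vh) ∈ Submodule.span ℝ (Set.range ub') := by
      rw [hsp]; trivial
    have hmap := Submodule.map_span Vh.subtype (Set.range ub')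
    have hmemmap : x ∈ Submodule.map Vh.subtype (Submodule.span ℝ (Set.range ub')) :=
      ⟨⟨x, hx⟩, hx', rfl⟩
    rw [hmap] at hmemmap
    have himg : Vh.subtype '' Set.range ub' = Set.range ub := by
      rw [← Set.range_comp]; rfl
    rwa [himg] at hmemmap
  have hexpand : ∀ x ∈ Vh, x = ∑ j, a x (ub j) • ub j := by
    intro x hx
    have hker : Submodule.span ℝ (Set.range ub) ≤ LinearMap.ker (T - LinearMap.id) := by
      rw [Submodule.span_le]
      rintro _ ⟨i, rfl⟩
      simp [LinearMap.mem_ker, hTub i]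
    have := hker (hVh_le hx)
    simp only [LinearMap.mem_ker, LinearMap.sub_apply, LinearMap.id_apply, sub_eq_zero] at this
    rw [← hTapply, this]
  -- w ∈ Vh
  have hspan_le : Submodule.span ℝ (Set.range fun j : {j : Fin N // (j : ℕ) < k} => ub j) ≤ Vh := by
    rw [Submodule.span_le]; rintro _ ⟨i, rfl⟩; exact hmem i
  have hwmem : w ∈ Vh := Submodule.sub_mem _ (hPmem u) (hspan_le (hEmem (Ph u)))
  -- orthogonality of Ek part to high modes
  have hEk_orth : ∀ j : Fin N, k ≤ (j : ℕ) → a (Ek (Ph u)) (ub j) = 0 := by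
    intro j hj
    have hker : Submodule.span ℝ (Set.range fun i : {i : Fin N // (i : ℕ) < k} => ub i)
        ≤ LinearMap.ker (a.flip (ub j)) := by
      rw [Submodule.span_le]
      rintro _ ⟨i, rfl⟩
      have hne : (i : Fin N) ≠ j := by
        intro h
        have h2 := i.2
        rw [h] at h2
        omega
      simp [LinearMap.mem_ker, LinearMap.flip_apply, horth, hne]
    have := hker (hEmem (Ph u))
    simpa [LinearMap.mem_ker, LinearMap.flip_apply] using this
  -- coefficients of w
  have hcoef : ∀ j : Fin N, a w (ub j) = if k ≤ (j : ℕ) then α j else 0 := by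
    intro j
    rcases le_or_gt k (j : ℕ) with h | h
    · rw [if_pos h]
      simp only [hw, map_sub, LinearMap.sub_apply]
      rw [hEk_orth j h]; ring
    · rw [if_neg h.not_ge]
      simp only [hw, map_sub, LinearMap.sub_apply]
      rw [hEproj (Ph u) j h]; ring
  -- a w w as a sum
  have hww : a w w = ∑ j ∈ s, (α j) ^ 2 := by
    have h1 : a w w = ∑ j, a w (ub j) * a w (ub j) := by
      calc a w w = a w (∑ j, a w (ub j) • ub j) := by rw [← hexpand w hwmem]
        _ = ∑ j, a w (ub j) * a w (ub j) := by
            rw [map_sum]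
            refine Finset.sum_congr rfl fun j _ => ?_
            rw [map_smul, smul_eq_mul]
    rw [h1, hs, Finset.sum_filter]
    refine Finset.sum_congr rfl fun j _ => ?_
    rw [hcoef j]
    rcases le_or_gt k (j : ℕ) with h | h
    · simp [h, sq]
    · simp [h.not_ge]
  -- key relations
  have hδle : ∀ j ∈ s, δ ≤ |1 / lamb j - 1 / lam| := by
    intro j hj
    rw [hδdef]
    exact Finset.inf'_le _ hj
  have hβα : ∀ j ∈ s, β j = α j * (1 / lam - 1 / lamb j) := by
    intro j hj
    have h1 : α j = lamb j * b (Ph u) (ub j) := by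
      rw [hα]
      simp only
      rw [hasymm, heig j (Ph u) (hPmem u), hbsymm]
    have h2 : α j = lam * b u (ub j) := by
      rw [hα]
      simp only
      rw [hPproj u (ub j) (hmem j), hu]
    have hbu : b u (ub j) = α j / lam := by
      rw [eq_div_iff hlam.ne']; linarith
    have hbp : b (Ph u) (ub j) = α j / lamb j := by
      rw [eq_div_iff (hpos j).ne']; linarith
    rw [hβ]
    simp only [map_sub, LinearMap.sub_apply]
    rw [hbu, hbp]
    field_simp
  have hα2 : ∀ j ∈ s, (α j) ^ 2 ≤ (β j) ^ 2 / δ ^ 2 := by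
    intro j hj
    rw [le_div_iff₀ (by positivity)]
    have h1 : δ ^ 2 ≤ (1 / lam - 1 / lamb j) ^ 2 := by
      calc δ ^ 2 ≤ |1 / lamb j - 1 / lam| ^ 2 :=
            pow_le_pow_left₀ hδpos.le (hδle j hj) 2
        _ = (1 / lam - 1 / lamb j) ^ 2 := by rw [sq_abs]; ring
    calc α j ^ 2 * δ ^ 2 ≤ α j ^ 2 * (1 / lam - 1 / lamb j) ^ 2 :=
          mul_le_mul_of_nonneg_left h1 (by positivity)
      _ = (β j) ^ 2 := by rw [hβα j hj]; ring
  -- Bessel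
  have hBessel : ∑ j ∈ s, lamb j * (β j) ^ 2 ≤ b v v := by
    set p : V := ∑ j ∈ s, (lamb j * β j) • ub j with hp
    have hvp : b v p = ∑ j ∈ s, lamb j * (β j) ^ 2 := by
      rw [hp, map_sum]
      refine Finset.sum_congr rfl fun j hj => ?_
      rw [map_smul, smul_eq_mul]
      have : b v (ub j) = β j := by rw [hβ, hv]
      rw [this]; ring
    have hip : ∀ i, b (ub i) p = (lamb i * β i * (1 / lamb i)) * (if i ∈ s then 1 else 0) := by
      intro i
      rw [hp, map_sum]
      simp only [map_smul, smul_eq_mul, hborth, mul_ite, mul_zero, mul_one]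
      rw [Finset.sum_ite_eq]
    have hpp : b p p = ∑ j ∈ s, lamb j * (β j) ^ 2 := by
      have hpy : ∀ y, b p y = ∑ i ∈ s, (lamb i * β i) * b (ub i) y := by
        intro y
        rw [hp, LinearMap.map_sum₂]
        exact Finset.sum_congr rfl fun i hi => by rw [LinearMap.map_smul₂, smul_eq_mul]
      rw [hpy p]
      refine Finset.sum_congr rfl fun i hi => ?_
      rw [hip i, if_pos hi, mul_one]
      have hne := (hpos i).ne'
      field_simp
    have h0 : 0 ≤ b (v - p) (v - p) := hb0 _
    have hexp : b (v - p) (v - p) = b v v - 2 * b v p + b p p := by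
      simp only [map_sub, LinearMap.sub_apply]
      rw [hbsymm p v]
      ring
    rw [hexp, hvp, hpp] at h0
    linarith
  -- combine
  have hstep : ∑ j ∈ s, (β j) ^ 2 ≤ (1 / lamb K) * b v v := by
    have h1 : ∀ j ∈ s, (β j) ^ 2 ≤ (1 / lamb K) * (lamb j * (β j) ^ 2) := by
      intro j hj
      have hjk : K ≤ j := by
        rw [hs, Finset.mem_filter] at hj
        exact hj.2
      have hl : lamb K ≤ lamb j := hmono hjk
      have hK0 := hpos K
      have hc : 1 ≤ 1 / lamb K * lamb j := by
        rw [div_mul_eq_mul_div, one_mul, le_div_iff₀ hK0, one_mul]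
        exact hl
      nlinarith [sq_nonneg (β j)]
    calc ∑ j ∈ s, (β j) ^ 2 ≤ ∑ j ∈ s, (1 / lamb K) * (lamb j * (β j) ^ 2) :=
          Finset.sum_le_sum h1
      _ = (1 / lamb K) * ∑ j ∈ s, lamb j * (β j) ^ 2 := by rw [Finset.mul_sum]
      _ ≤ (1 / lamb K) * b v v :=
          mul_le_mul_of_nonneg_left hBessel (by have := hpos K; positivity)
  calc a w w = ∑ j ∈ s, (α j) ^ 2 := hww
    _ ≤ ∑ j ∈ s, (β j) ^ 2 / δ ^ 2 := Finset.sum_le_sum hα2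
    _ = (∑ j ∈ s, (β j) ^ 2) / δ ^ 2 := by rw [Finset.sum_div]
    _ ≤ ((1 / lamb K) * b v v) / δ ^ 2 := by gcongr
    _ = (1 / lamb K) / δ ^ 2 * b v v := by ring
end

section
/- Under the same setting, assume δ := min_{k < j ≤ N} |μ̄_j − μ| > 0. Then ‖(I − E_k) P_h u‖_b ≤ (μ̄_{k+1}/δ) ‖u − P_h u‖_b. -/
/-- with `δ = min_{k < j ≤ N} |μ̄_j − μ| > 0` one has
`‖(I − E_k) P_h u‖_b ≤ (μ̄_{k+1}/δ) ‖u − P_h u‖_b`. -/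
theorem stmt_6 {V : Type*} [AddCommGroup V] [Module ℝ V]
    (a b : LinearMap.BilinForm ℝ V)
    (hasymm : ∀ x y, a x y = a y x) (hbsymm : ∀ x y, b x y = b y x)
    (hapos : ∀ x, x ≠ 0 → 0 < a x x) (hbpos : ∀ x, x ≠ 0 → 0 < b x x)
    (N : ℕ) (Vh : Submodule ℝ V) (hdim : Module.finrank ℝ Vh = N)
    (lamb : Fin N → ℝ) (ub : Fin N → V) (hmem : ∀ j, ub j ∈ Vh)
    (hpos : ∀ j, 0 < lamb j) (hmono : Monotone lamb)
    (heig : ∀ j, ∀ v ∈ Vh, a (ub j) v = lamb j * b (ub j) v)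
    (horth : ∀ i j, a (ub i) (ub j) = if i = j then 1 else 0)
    (Ph : V →ₗ[ℝ] V) (hPmem : ∀ w, Ph w ∈ Vh)
    (hPproj : ∀ w, ∀ vh ∈ Vh, a (Ph w) vh = a w vh)
    (k : ℕ) (hk : k < N)
    (Ek : V →ₗ[ℝ] V)
    (hEmem : ∀ w, Ek w ∈ Submodule.span ℝ (Set.range fun j : {j : Fin N // (j : ℕ) < k} => ub j))
    (hEproj : ∀ w, ∀ j : Fin N, (j : ℕ) < k → a (Ek w) (ub j) = a w (ub j))
    (lam : ℝ) (hlam : 0 < lam) (u : V) (hu : ∀ v, a u v = lam * b u v)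
    (δ : ℝ)
    (hδdef : δ = (Finset.univ.filter (fun j : Fin N => k ≤ (j : ℕ))).inf'
        ⟨⟨k, hk⟩, by simp⟩ (fun j => |1 / lamb j - 1 / lam|))
    (hδpos : 0 < δ) :
    Real.sqrt (b (Ph u - Ek (Ph u)) (Ph u - Ek (Ph u))) ≤
      (1 / lamb ⟨k, hk⟩) / δ * Real.sqrt (b (u - Ph u) (u - Ph u)) := by
  classical
  have hbnn : ∀ x, 0 ≤ b x x := by
    intro x
    rcases eq_or_ne x 0 with h | h
    · simp [h]
    · exact (hbpos x h).le
  set e : V := u - Ph u with he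
  set w : V := Ph u - Ek (Ph u) with hw
  set s : Finset (Fin N) := Finset.univ.filter (fun j : Fin N => k ≤ (j : ℕ)) with hs
  set c : Fin N → ℝ := fun j => a u (ub j) with hc
  -- b-orthogonality of the eigenvectors
  have hb_ub : ∀ i j, b (ub i) (ub j) = (if i = j then (1 : ℝ) else 0) / lamb i := by
    intro i j
    have h1 := heig i (ub j) (hmem j)
    have h2 := horth i j
    rw [h1] at h2
    rw [eq_div_iff (hpos i).ne']
    linarith [h2]
  -- the eigenvectors span Vh
  have hli : LinearIndependent ℝ ub := by
    rw [linearIndependent_iff']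
    intro t g hg i hi
    have h := congrArg (fun x => a x (ub i)) hg
    simp only [map_sum, map_smul, LinearMap.sum_apply, LinearMap.smul_apply, smul_eq_mul,
      map_zero, LinearMap.zero_apply] at h
    rw [Finset.sum_congr rfl (fun j _ => by rw [horth j i])] at h
    simp only [mul_ite, mul_one, mul_zero, Finset.sum_ite_eq' t i g, hi, if_true] at h
    exact h
  have hle : Submodule.span ℝ (Set.range ub) ≤ Vh := by
    rw [Submodule.span_le]
    rintro x ⟨j, rfl⟩
    exact hmem j
  have hNpos : 0 < N := Nat.lt_of_le_of_lt (Nat.zero_le k) hk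
  have hfd : FiniteDimensional ℝ Vh := FiniteDimensional.of_finrank_pos (hdim ▸ hNpos)
  have hfr : Module.finrank ℝ (Submodule.span ℝ (Set.range ub)) = N := by
    rw [finrank_span_eq_card hli, Fintype.card_fin]
  have hspan : Submodule.span ℝ (Set.range ub) = Vh :=
    Submodule.eq_of_le_of_finrank_le hle (by rw [hdim, hfr])
  -- a vector in Vh which is a-orthogonal to all eigenvectors is zero
  have hzero : ∀ z, z ∈ Vh → (∀ i, a z (ub i) = 0) → z = 0 := by
    intro z hz h0
    by_contra hne
    have hzz := hapos z hne
    rw [← hspan, Submodule.mem_span_range_iff_exists_fun] at hz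
    obtain ⟨d, hd⟩ := hz
    have hzz0 : a z z = 0 := by
      have : a z z = a z (∑ j, d j • ub j) := by rw [hd]
      rw [this, map_sum]
      simp [h0]
    linarith
  -- membership facts about Ek
  have hspan2 : Submodule.span ℝ (Set.range fun j : {j : Fin N // (j : ℕ) < k} => ub j) ≤ Vh := by
    rw [Submodule.span_le]
    rintro x ⟨j, rfl⟩
    exact hmem j
  have hEkmem : ∀ x, Ek x ∈ Vh := fun x => hspan2 (hEmem x)
  have hEk_orth : ∀ x, ∀ i : Fin N, k ≤ (i : ℕ) → a (Ek x) (ub i) = 0 := by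
    intro x i hi
    have hgen : ∀ y ∈ Submodule.span ℝ
        (Set.range fun j : {j : Fin N // (j : ℕ) < k} => ub j), a y (ub i) = 0 := by
      intro y hy
      induction hy using Submodule.span_induction with
      | mem x hx =>
        obtain ⟨j, rfl⟩ := hx
        rw [horth]
        have hne : (j : Fin N) ≠ i := by
          intro h
          have := j.2
          rw [h] at this
          omega
        simp [hne]
      | zero => simp
      | add x y _ _ hx hy => rw [map_add, LinearMap.add_apply, hx, hy, add_zero]
      | smul r x _ hx => rw [map_smul, LinearMap.smul_apply, hx, smul_zero]
    exact hgen _ (hEmem x)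
  -- representation of w
  have hwmem : w ∈ Vh := Vh.sub_mem (hPmem u) (hEkmem (Ph u))
  have hwrep : w = ∑ j ∈ s, c j • ub j := by
    rw [← sub_eq_zero]
    apply hzero
    · exact Vh.sub_mem hwmem (Submodule.sum_mem _ fun j _ => Vh.smul_mem _ (hmem j))
    · intro i
      have hsum : a (∑ j ∈ s, c j • ub j) (ub i) = if i ∈ s then c i else 0 := by
        simp only [map_sum, map_smul, LinearMap.sum_apply, LinearMap.smul_apply, smul_eq_mul]
        rw [Finset.sum_congr rfl (fun j _ => by rw [horth j i])]
        simp only [mul_ite, mul_one, mul_zero, Finset.sum_ite_eq' s i c]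
      rw [map_sub, LinearMap.sub_apply, hsum]
      rw [hw, map_sub, LinearMap.sub_apply]
      by_cases hik : k ≤ (i : ℕ)
      · have his : i ∈ s := by simp [hs, hik]
        rw [hEk_orth (Ph u) i hik, hPproj u (ub i) (hmem i)]
        simp [his, hc]
      · have his : i ∉ s := by simp [hs, hik]
        rw [hEproj (Ph u) i (by omega)]
        simp [his]
  -- key scalar products
  have hbe : ∀ j, b e (ub j) = (1 / lam - 1 / lamb j) * c j := by
    intro j
    have h1 : b u (ub j) = c j / lam := by
      have h := hu (ub j)
      rw [eq_div_iff hlam.ne']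
      rw [hc]
      linarith [h]
    have h2 : b (Ph u) (ub j) = c j / lamb j := by
      have hg := heig j (Ph u) (hPmem u)
      have hp := hPproj u (ub j) (hmem j)
      rw [eq_div_iff (hpos j).ne']
      have : b (Ph u) (ub j) = b (ub j) (Ph u) := hbsymm _ _
      rw [this]
      have ha' : a (ub j) (Ph u) = a u (ub j) := by rw [hasymm, hp]
      rw [hc]
      calc b (ub j) (Ph u) * lamb j = lamb j * b (ub j) (Ph u) := by ring
        _ = a (ub j) (Ph u) := (hg).symm
        _ = a u (ub j) := ha'
    rw [he, map_sub, LinearMap.sub_apply, h1, h2]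
    ring
  -- expansion of b on sums of eigenvectors
  have hexp : ∀ f g : Fin N → ℝ, b (∑ j ∈ s, f j • ub j) (∑ i ∈ s, g i • ub i) =
      ∑ j ∈ s, f j * g j * (1 / lamb j) := by
    intro f g
    simp only [map_sum, LinearMap.sum_apply, map_smul, LinearMap.smul_apply, smul_eq_mul]
    refine Finset.sum_congr rfl fun j hj => ?_
    have hinner : ∑ i ∈ s, f i * (b (ub i)) (ub j) = f j * (1 / lamb j) := by
      rw [Finset.sum_eq_single_of_mem j hj]
      · rw [hb_ub]
        simp
      · intro i hi hne
        rw [hb_ub, if_neg hne]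
        simp
    rw [hinner]
    ring
  -- norm of w
  have hbww : b w w = ∑ j ∈ s, c j ^ 2 * (1 / lamb j) := by
    rw [hwrep, hexp]
    exact Finset.sum_congr rfl fun j _ => by ring
  -- Bessel-type inequality
  have hbessel : ∑ j ∈ s, lamb j * (b e (ub j)) ^ 2 ≤ b e e := by
    set β : Fin N → ℝ := fun j => lamb j * b e (ub j) with hβ
    set S : V := ∑ j ∈ s, β j • ub j with hS
    have h0 : 0 ≤ b (e - S) (e - S) := hbnn _
    have heS : b e S = ∑ j ∈ s, lamb j * (b e (ub j)) ^ 2 := by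
      rw [hS, map_sum]
      refine Finset.sum_congr rfl fun j _ => ?_
      rw [map_smul, smul_eq_mul, hβ]
      ring
    have hSe : b S e = ∑ j ∈ s, lamb j * (b e (ub j)) ^ 2 := by
      rw [hbsymm, heS]
    have hSS : b S S = ∑ j ∈ s, lamb j * (b e (ub j)) ^ 2 := by
      rw [hS, hexp]
      refine Finset.sum_congr rfl fun j _ => ?_
      rw [hβ]
      field_simp [(hpos j).ne']
    have hexp2 : b (e - S) (e - S) = b e e - ∑ j ∈ s, lamb j * (b e (ub j)) ^ 2 := by
      simp only [map_sub, LinearMap.sub_apply]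
      rw [heS, hSe, hSS]
      ring
    rw [hexp2] at h0
    linarith
  -- coefficient bound
  have hδle : ∀ j ∈ s, δ ≤ |1 / lamb j - 1 / lam| := by
    intro j hj
    rw [hδdef]
    exact Finset.inf'_le _ hj
  have hcoeff : ∀ j ∈ s, δ ^ 2 * c j ^ 2 ≤ (b e (ub j)) ^ 2 := by
    intro j hj
    rw [hbe j]
    have h1 : δ ^ 2 ≤ (1 / lamb j - 1 / lam) ^ 2 := by
      have := hδle j hj
      nlinarith [sq_abs (1 / lamb j - 1 / lam), hδpos]
    nlinarith [sq_nonneg (c j)]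
  -- final estimate
  have hkk : (⟨k, hk⟩ : Fin N) ∈ s := by simp [hs]
  set μk : ℝ := 1 / lamb ⟨k, hk⟩ with hμk
  have hμkpos : 0 < μk := by
    rw [hμk]
    exact one_div_pos.mpr (hpos _)
  have hstep : ∀ j ∈ s, c j ^ 2 * (1 / lamb j) ≤ (μk / δ) ^ 2 * (lamb j * (b e (ub j)) ^ 2) := by
    intro j hj
    have hkj : lamb ⟨k, hk⟩ ≤ lamb j := by
      apply hmono
      rw [Fin.le_def]
      simp only [hs, Finset.mem_filter] at hj
      exact hj.2
    have hpj := hpos j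
    have hpk := hpos (⟨k, hk⟩ : Fin N)
    have hc2 := hcoeff j hj
    rw [hμk, div_pow, div_pow, one_pow]
    rw [div_div, div_mul_eq_mul_div, le_div_iff₀ (by positivity), one_mul]
    have key : c j ^ 2 * (lamb ⟨k, hk⟩ ^ 2 * δ ^ 2) ≤ lamb j ^ 2 * (b e (ub j)) ^ 2 := by
      have h1 : lamb ⟨k, hk⟩ ^ 2 ≤ lamb j ^ 2 := by nlinarith
      have h2 : lamb j ^ 2 * (δ ^ 2 * c j ^ 2) ≤ lamb j ^ 2 * (b e (ub j)) ^ 2 :=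
        mul_le_mul_of_nonneg_left hc2 (sq_nonneg _)
      nlinarith [mul_le_mul_of_nonneg_right h1
        (mul_nonneg (sq_nonneg δ) (sq_nonneg (c j)))]
    calc c j ^ 2 * (1 / lamb j) * (lamb ⟨k, hk⟩ ^ 2 * δ ^ 2)
        = (c j ^ 2 * (lamb ⟨k, hk⟩ ^ 2 * δ ^ 2)) / lamb j := by ring
      _ ≤ (lamb j ^ 2 * (b e (ub j)) ^ 2) / lamb j := by gcongr
      _ = lamb j * (b e (ub j)) ^ 2 := by field_simp
  have hkey : b w w ≤ (μk / δ) ^ 2 * b e e := by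
    calc b w w = ∑ j ∈ s, c j ^ 2 * (1 / lamb j) := hbww
      _ ≤ ∑ j ∈ s, (μk / δ) ^ 2 * (lamb j * (b e (ub j)) ^ 2) := Finset.sum_le_sum hstep
      _ = (μk / δ) ^ 2 * ∑ j ∈ s, lamb j * (b e (ub j)) ^ 2 := by rw [Finset.mul_sum]
      _ ≤ (μk / δ) ^ 2 * b e e := by
          apply mul_le_mul_of_nonneg_left hbessel (by positivity)
  calc Real.sqrt (b w w) ≤ Real.sqrt ((μk / δ) ^ 2 * b e e) := Real.sqrt_le_sqrt hkey
    _ = (μk / δ) * Real.sqrt (b e e) := by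
        rw [Real.sqrt_mul (sq_nonneg _), Real.sqrt_sq (by positivity)]
    _ = μk / δ * Real.sqrt (b e e) := rfl
end

section
/- Let V be a real vector space with positive definite symmetric bilinear forms a and b, let V_h ⊆ V be an N-dimensional subspace with discrete eigenpairs (λ̄_j, ū_j) as above, P_h the a-orthogonal projection onto V_h, and E_k the a-orthogonal projection onto span{ū_1,…,ū_k}. Let (λ_i, u_i) be a continuous eigenpair with a(u_i,v) = λ_i b(u_i,v) for all v ∈ V, set δ := min_{k < j ≤ N} |1/λ̄_j − 1/λ_i| > 0, and suppose ‖(I − P_h)w‖_b ≤ η ‖(I − P_h)w‖_a for all w ∈ V (with some η > 0). Then ‖u_i − E_k u_i‖_a² ≤ (1 + (μ̄_{k+1}/δ²) η²) ‖(I − P_h) u_i‖_a², where μ̄_{k+1} = 1/λ̄_{k+1}. -/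
/-- energy-norm error estimate
`‖u_i − E_k u_i‖_a² ≤ (1 + (μ̄_{k+1}/δ²) η²) ‖(I − P_h) u_i‖_a²`. -/
theorem stmt_8 {V : Type*} [AddCommGroup V] [Module ℝ V]
    (a b : LinearMap.BilinForm ℝ V)
    (hasymm : ∀ x y, a x y = a y x) (hbsymm : ∀ x y, b x y = b y x)
    (hapos : ∀ x, x ≠ 0 → 0 < a x x) (hbpos : ∀ x, x ≠ 0 → 0 < b x x)
    (N : ℕ) (Vh : Submodule ℝ V) (hdim : Module.finrank ℝ Vh = N)
    (lamb : Fin N → ℝ) (ub : Fin N → V) (hmem : ∀ j, ub j ∈ Vh)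
    (hpos : ∀ j, 0 < lamb j) (hmono : Monotone lamb)
    (heig : ∀ j, ∀ v ∈ Vh, a (ub j) v = lamb j * b (ub j) v)
    (horth : ∀ i j, a (ub i) (ub j) = if i = j then 1 else 0)
    (Ph : V →ₗ[ℝ] V) (hPmem : ∀ w, Ph w ∈ Vh)
    (hPproj : ∀ w, ∀ vh ∈ Vh, a (Ph w) vh = a w vh)
    (k : ℕ) (hk : k < N)
    (Ek : V →ₗ[ℝ] V)
    (hEmem : ∀ w, Ek w ∈ Submodule.span ℝ (Set.range fun j : {j : Fin N // (j : ℕ) < k} => ub j))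
    (hEproj : ∀ w, ∀ j : Fin N, (j : ℕ) < k → a (Ek w) (ub j) = a w (ub j))
    (lam : ℝ) (hlam : 0 < lam) (u : V) (hu : ∀ v, a u v = lam * b u v)
    (δ : ℝ)
    (hδdef : δ = (Finset.univ.filter (fun j : Fin N => k ≤ (j : ℕ))).inf'
        ⟨⟨k, hk⟩, by simp⟩ (fun j => |1 / lamb j - 1 / lam|))
    (hδpos : 0 < δ)
    (η : ℝ) (hηpos : 0 < η)
    (hη : ∀ w : V, Real.sqrt (b (w - Ph w) (w - Ph w)) ≤
        η * Real.sqrt (a (w - Ph w) (w - Ph w))) :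
    a (u - Ek u) (u - Ek u) ≤
      (1 + (1 / lamb ⟨k, hk⟩) / δ ^ 2 * η ^ 2) * a (u - Ph u) (u - Ph u) := by
  classical
  have ha0 : ∀ x, 0 ≤ a x x := by
    intro x
    rcases eq_or_ne x 0 with h | h
    · simp [h]
    · exact (hapos x h).le
  have hb0 : ∀ x, 0 ≤ b x x := by
    intro x
    rcases eq_or_ne x 0 with h | h
    · simp [h]
    · exact (hbpos x h).le
  set e := u - Ph u with he
  set c : Fin N → ℝ := fun j => a u (ub j) with hc
  haveI : FiniteDimensional ℝ Vh := Module.finite_of_finrank_pos (by rw [hdim]; omega)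
  -- linear independence of ub
  have hli : LinearIndependent ℝ ub := by
    rw [Fintype.linearIndependent_iff]
    intro g hg i
    have h1 : a (∑ j, g j • ub j) (ub i) = g i := by
      rw [LinearMap.BilinForm.sum_left]
      simp only [LinearMap.BilinForm.smul_left, horth]
      simp [Finset.sum_ite_eq']
    rw [hg] at h1
    simpa using h1.symm
  -- span of ub is Vh
  have hspan : Submodule.span ℝ (Set.range ub) = Vh := by
    apply Submodule.eq_of_le_of_finrank_le
    · rw [Submodule.span_le]
      rintro x ⟨j, rfl⟩
      exact hmem j
    · rw [hdim, finrank_span_eq_card hli, Fintype.card_fin]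
  -- representation of elements of Vh
  have hrep : ∀ w ∈ Vh, w = ∑ j, a w (ub j) • ub j := by
    intro w hw
    set r := w - ∑ j, a w (ub j) • ub j with hr
    have hrV : r ∈ Vh :=
      Submodule.sub_mem _ hw
        (Submodule.sum_mem _ fun j _ => Submodule.smul_mem _ _ (hmem j))
    have hro : ∀ j, a r (ub j) = 0 := by
      intro j
      rw [hr, map_sub, LinearMap.sub_apply, LinearMap.BilinForm.sum_left]
      simp only [LinearMap.BilinForm.smul_left, horth]
      simp [Finset.sum_ite_eq']
    obtain ⟨t, ht⟩ := (Submodule.mem_span_range_iff_exists_fun ℝ).1 (hspan ▸ hrV)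
    have hrr : a r r = 0 := by
      nth_rewrite 1 [← ht]
      rw [LinearMap.BilinForm.sum_left]
      apply Finset.sum_eq_zero
      intro i _
      rw [LinearMap.BilinForm.smul_left, hasymm, hro, mul_zero]
    have hr0 : r = 0 := by
      by_contra h
      exact (hapos r h).ne' hrr
    exact sub_eq_zero.mp hr0
  -- b-orthogonality
  have hborth : ∀ i j, b (ub i) (ub j) = if i = j then 1 / lamb i else 0 := by
    intro i j
    have h2 := horth i j
    rw [heig i (ub j) (hmem j)] at h2
    have hne := (hpos i).ne'
    rcases eq_or_ne i j with rfl | hij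
    · rw [if_pos rfl] at h2 ⊢
      rw [eq_div_iff hne, mul_comm]
      exact h2
    · simp only [if_neg hij] at h2 ⊢
      exact (mul_eq_zero.mp h2).resolve_left hne
  -- eigen-coefficient relation
  have hbje : ∀ j : Fin N, b (ub j) e = c j * (1 / lam - 1 / lamb j) := by
    intro j
    have h1 : b (ub j) u = c j / lam := by
      rw [hbsymm, eq_div_iff hlam.ne']
      have h := hu (ub j)
      rw [hc]
      dsimp only
      linarith [h]
    have h2 : b (ub j) (Ph u) = c j / lamb j := by
      have h3 := heig j (Ph u) (hPmem u)
      have h4 : a (ub j) (Ph u) = c j := by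
        rw [hasymm]; exact hPproj u (ub j) (hmem j)
      rw [h4] at h3
      rw [eq_div_iff (hpos j).ne']
      linarith [h3]
    have h5 : b (ub j) e = b (ub j) u - b (ub j) (Ph u) := by
      rw [he, map_sub]
    rw [h5, h1, h2]
    ring
  -- δ lower bound
  have hδle : ∀ j : Fin N, k ≤ (j : ℕ) → δ ≤ |1 / lamb j - 1 / lam| := by
    intro j hj
    rw [hδdef]
    exact Finset.inf'_le _ (by simp [hj])
  -- Bessel inequality in b
  have hbessel : ∑ j, lamb j * (b (ub j) e) ^ 2 ≤ b e e := by
    set p := ∑ j, (lamb j * b (ub j) e) • ub j with hp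
    have hwp : ∀ w, b w p = ∑ j, (lamb j * b (ub j) e) * b w (ub j) := by
      intro w
      rw [hp, map_sum]
      apply Finset.sum_congr rfl
      intro j _
      rw [LinearMap.map_smul, smul_eq_mul]
    have hpu : ∀ i, b (ub i) p = b (ub i) e := by
      intro i
      rw [hwp]
      simp only [hborth]
      rw [Finset.sum_eq_single i]
      · rw [if_pos rfl, mul_one_div, mul_div_assoc, mul_comm, div_mul_cancel₀ _ (hpos i).ne']
      · intro j _ hji
        rw [if_neg (Ne.symm hji), mul_zero]
      · intro h; exact absurd (Finset.mem_univ i) h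
    have hep : b e p = ∑ j, lamb j * (b (ub j) e) ^ 2 := by
      rw [hwp]
      apply Finset.sum_congr rfl
      intro j _
      rw [hbsymm e (ub j)]
      ring
    have hpp : b p p = ∑ j, lamb j * (b (ub j) e) ^ 2 := by
      rw [hp, LinearMap.BilinForm.sum_left]
      apply Finset.sum_congr rfl
      intro j _
      rw [LinearMap.BilinForm.smul_left, hpu j]
      ring
    have hpe : b p e = b e p := hbsymm p e
    have hexp : b (e - p) (e - p) = b e e - b e p - b p e + b p p := by
      simp only [map_sub, LinearMap.sub_apply]
      ring
    have h0 := hb0 (e - p)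
    rw [hexp, hep, hpe, hep, hpp] at h0
    linarith
  -- squared η inequality
  have hbe : b e e ≤ η ^ 2 * a e e := by
    have h1 := hη u
    rw [← he] at h1
    nlinarith [Real.sq_sqrt (hb0 e), Real.sq_sqrt (ha0 e), Real.sqrt_nonneg (a e e),
      Real.sqrt_nonneg (b e e), hηpos.le]
  -- coefficients of Ek u
  have hEk : ∀ j : Fin N, a (Ek u) (ub j) = if (j : ℕ) < k then c j else 0 := by
    intro j
    by_cases hj : (j : ℕ) < k
    · rw [if_pos hj]
      exact hEproj u j hj
    · rw [if_neg hj]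
      push_neg at hj
      obtain ⟨t, ht⟩ := (Submodule.mem_span_range_iff_exists_fun ℝ).1 (hEmem u)
      rw [← ht, LinearMap.BilinForm.sum_left]
      apply Finset.sum_eq_zero
      intro i _
      rw [LinearMap.BilinForm.smul_left, horth, if_neg, mul_zero]
      intro hij
      have : ((i : Fin N) : ℕ) < k := i.2
      omega
  -- Ek u ∈ Vh
  have hEkV : Ek u ∈ Vh := by
    have hle : Submodule.span ℝ (Set.range fun j : {j : Fin N // (j : ℕ) < k} => ub j) ≤ Vh := by
      rw [Submodule.span_le]
      rintro x ⟨j, rfl⟩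
      exact hmem j
    exact hle (hEmem u)
  have hw0V : Ph u - Ek u ∈ Vh := Submodule.sub_mem _ (hPmem u) hEkV
  -- coefficients of w0 = Ph u - Ek u
  have hw0c : ∀ j, a (Ph u - Ek u) (ub j) = if (j : ℕ) < k then 0 else c j := by
    intro j
    rw [map_sub, LinearMap.sub_apply, hPproj u (ub j) (hmem j), hEk j]
    rcases lt_or_ge (j : ℕ) k with hj | hj
    · rw [if_pos hj, if_pos hj, hc, sub_self]
    · rw [if_neg (by omega), if_neg (by omega), hc, sub_zero]
  -- norm of w0
  have haw0 : a (Ph u - Ek u) (Ph u - Ek u)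
      = ∑ j : Fin N, (if (j : ℕ) < k then 0 else c j) ^ 2 := by
    have hw0rep := hrep _ hw0V
    calc a (Ph u - Ek u) (Ph u - Ek u)
        = a (Ph u - Ek u) (∑ j, a (Ph u - Ek u) (ub j) • ub j) := by rw [← hw0rep]
      _ = ∑ j, a (Ph u - Ek u) (ub j) * a (Ph u - Ek u) (ub j) := by
          rw [map_sum]
          exact Finset.sum_congr rfl fun j _ => by rw [LinearMap.map_smul, smul_eq_mul]
      _ = ∑ j : Fin N, (if (j : ℕ) < k then 0 else c j) ^ 2 :=
          Finset.sum_congr rfl fun j _ => by rw [hw0c j]; ring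
  -- orthogonal decomposition
  have hdecomp : a (u - Ek u) (u - Ek u) = a e e + a (Ph u - Ek u) (Ph u - Ek u) := by
    have hsplit : u - Ek u = e + (Ph u - Ek u) := by
      rw [he]; abel
    have hortho : a e (Ph u - Ek u) = 0 := by
      rw [he]
      simp only [map_sub, LinearMap.sub_apply]
      rw [hPproj u (Ph u) (hPmem u), hPproj u (Ek u) hEkV]
      ring
    have hortho2 : a (Ph u - Ek u) e = 0 := by rw [hasymm]; exact hortho
    rw [hsplit]
    simp only [map_add, LinearMap.add_apply]
    rw [hortho, hortho2]
    ring
  have hq : (0:ℝ) ≤ (1 / lamb ⟨k, hk⟩) / δ ^ 2 :=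
    div_nonneg (div_nonneg zero_le_one (hpos ⟨k, hk⟩).le) (sq_nonneg δ)
  -- termwise bound
  have hterm : ∀ j : Fin N, (if (j : ℕ) < k then 0 else c j) ^ 2 ≤
      (1 / lamb ⟨k, hk⟩) / δ ^ 2 * (lamb j * (b (ub j) e) ^ 2) := by
    intro j
    by_cases hj : (j : ℕ) < k
    · rw [if_pos hj]
      have h0 : (0:ℝ) ^ 2 = 0 := by norm_num
      rw [h0]
      exact mul_nonneg hq (mul_nonneg (hpos j).le (sq_nonneg _))
    · rw [if_neg hj]
      push_neg at hj
      have h1 : δ ≤ |1 / lamb j - 1 / lam| := hδle j hj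
      have h2 : (b (ub j) e) ^ 2 = (c j) ^ 2 * (1 / lamb j - 1 / lam) ^ 2 := by
        rw [hbje j]; ring
      have h3 : δ ^ 2 ≤ (1 / lamb j - 1 / lam) ^ 2 := by
        nlinarith [abs_nonneg (1 / lamb j - 1 / lam), sq_abs (1 / lamb j - 1 / lam)]
      have hlk : lamb ⟨k, hk⟩ ≤ lamb j := hmono (by rw [Fin.le_def]; exact hj)
      have hkpos := hpos ⟨k, hk⟩
      have key : lamb ⟨k, hk⟩ * δ ^ 2 * (c j) ^ 2 ≤
          lamb j * ((c j) ^ 2 * (1 / lamb j - 1 / lam) ^ 2) := by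
        nlinarith [mul_nonneg (mul_nonneg (sub_nonneg.2 hlk) (sq_nonneg δ)) (sq_nonneg (c j)),
          mul_nonneg (mul_nonneg (hpos j).le (sq_nonneg (c j))) (sub_nonneg.2 h3)]
      rw [h2]
      have heq : (1 / lamb ⟨k, hk⟩) / δ ^ 2 * (lamb j * ((c j) ^ 2 * (1 / lamb j - 1 / lam) ^ 2))
          = (lamb j * ((c j) ^ 2 * (1 / lamb j - 1 / lam) ^ 2)) / (lamb ⟨k, hk⟩ * δ ^ 2) := by
        ring
      rw [heq, le_div_iff₀ (by positivity)]
      linarith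
  -- sum the bound
  have hsum1 : ∑ j : Fin N, (if (j : ℕ) < k then 0 else c j) ^ 2 ≤
      (1 / lamb ⟨k, hk⟩) / δ ^ 2 * ∑ j, lamb j * (b (ub j) e) ^ 2 := by
    rw [Finset.mul_sum]
    exact Finset.sum_le_sum fun j _ => hterm j
  have hfin : ∑ j : Fin N, (if (j : ℕ) < k then 0 else c j) ^ 2 ≤
      (1 / lamb ⟨k, hk⟩) / δ ^ 2 * η ^ 2 * a e e := by
    have h4 : (1 / lamb ⟨k, hk⟩) / δ ^ 2 * (∑ j, lamb j * (b (ub j) e) ^ 2) ≤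
        (1 / lamb ⟨k, hk⟩) / δ ^ 2 * (η ^ 2 * a e e) :=
      mul_le_mul_of_nonneg_left (le_trans hbessel hbe) hq
    calc ∑ j : Fin N, (if (j : ℕ) < k then 0 else c j) ^ 2
        ≤ (1 / lamb ⟨k, hk⟩) / δ ^ 2 * ∑ j, lamb j * (b (ub j) e) ^ 2 := hsum1
      _ ≤ (1 / lamb ⟨k, hk⟩) / δ ^ 2 * (η ^ 2 * a e e) := h4
      _ = (1 / lamb ⟨k, hk⟩) / δ ^ 2 * η ^ 2 * a e e := by ring
  rw [hdecomp, haw0]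
  have hexpand : (1 + (1 / lamb ⟨k, hk⟩) / δ ^ 2 * η ^ 2) * a e e
      = a e e + (1 / lamb ⟨k, hk⟩) / δ ^ 2 * η ^ 2 * a e e := by ring
  rw [hexpand]
  linarith
end

section
/- Under the same setting as the preceding energy-norm estimate, the b-norm error satisfies ‖u_i − E_k u_i‖_b ≤ (1 + μ̄_{k+1}/δ) η ‖(I − P_h) u_i‖_a, and consequently ‖u_i − E_k u_i‖_b ≤ (1 + μ̄_{k+1}/δ) η ‖u_i − E_k u_i‖_a. -/
/-!
Write `u - E_k u = w + e` with `w = u - P_h u` and `e = P_h u - E_k u ∈ V_h`. In the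
`a`-orthonormal eigenbasis, `e` has coefficient `a(u, ū_j)` for `j ≥ k` and `0` below `k`, while
`b(w, ū_j) = a(u, ū_j) (1/λ - 1/λ̄_j)`. The `ū_j` are `b`-orthogonal with `b(ū_j, ū_j) = 1/λ̄_j`,
so Bessel's inequality for `b` bounds `‖e‖_b` by `(μ̄_{k+1}/δ) ‖w‖_b`. The triangle inequality and
`‖w‖_b ≤ η ‖w‖_a` give the first estimate; `w` is `a`-orthogonal to `e`, so
`‖w‖_a ≤ ‖u - E_k u‖_a`, which gives the second.
-/

open Finset

namespace LinearMap.BilinForm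

variable {V : Type*} [AddCommGroup V] [Module ℝ V] (B : LinearMap.BilinForm ℝ V)

theorem apply_self_nonneg_of_pos (hB : ∀ x, x ≠ 0 → 0 < B x x) (x : V) : 0 ≤ B x x := by
  rcases eq_or_ne x 0 with rfl | hx
  · simp
  · exact (hB x hx).le

theorem sqrt_apply_add_self_le (hs : ∀ x, 0 ≤ B x x) (hB : B.IsSymm) (x y : V) :
    √(B (x + y) (x + y)) ≤ √(B x x) + √(B y y) := by
  have hxy : B x y ≤ √(B x x) * √(B y y) := by
    rw [← Real.sqrt_mul (hs x)]
    exact Real.le_sqrt_of_sq_le (B.apply_sq_le_of_symm hs (isSymm_iff.mp hB) x y)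
  have hexpand : B (x + y) (x + y) = B x x + 2 * B x y + B y y := by
    simp only [map_add, LinearMap.add_apply, hB.eq y x]
    ring
  rw [Real.sqrt_le_left (by positivity), hexpand]
  nlinarith [Real.sq_sqrt (hs x), Real.sq_sqrt (hs y)]

theorem sqrt_apply_add_self_le_of_le_sq_mul (hs : ∀ x, 0 ≤ B x x) (hB : B.IsSymm) {x y : V}
    {K : ℝ} (hK : 0 ≤ K) (hy : B y y ≤ K ^ 2 * B x x) :
    √(B (x + y) (x + y)) ≤ (1 + K) * √(B x x) :=
  calc √(B (x + y) (x + y)) ≤ √(B x x) + √(B y y) := B.sqrt_apply_add_self_le hs hB x y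
    _ ≤ √(B x x) + √(K ^ 2 * B x x) := by gcongr
    _ = (1 + K) * √(B x x) := by rw [Real.sqrt_mul (sq_nonneg K), Real.sqrt_sq hK]; ring

theorem apply_self_le_apply_add_self (hs : ∀ x, 0 ≤ B x x) (hB : B.IsSymm) {x y : V}
    (hxy : B x y = 0) : B x x ≤ B (x + y) (x + y) := by
  simp only [map_add, LinearMap.add_apply, hxy, hB.eq y x]
  linarith [hs y]

section Orthogonal

variable {B} {ι : Type*} [Fintype ι] [DecidableEq ι] {v : ι → V} {s : ι → ℝ}

theorem apply_sum_smul_left_of_ortho (horth : ∀ i j, B (v i) (v j) = if i = j then s i else 0)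
    (c : ι → ℝ) (j : ι) : B (∑ i, c i • v i) (v j) = c j * s j := by
  simp [map_sum, horth]

theorem apply_sum_smul_self_of_ortho (horth : ∀ i j, B (v i) (v j) = if i = j then s i else 0)
    (c : ι → ℝ) : B (∑ i, c i • v i) (∑ i, c i • v i) = ∑ i, c i ^ 2 * s i := by
  simp only [sum_right, smul_right, apply_sum_smul_left_of_ortho horth]
  exact sum_congr rfl fun i _ => by ring

theorem linearIndependent_of_ortho (horth : ∀ i j, B (v i) (v j) = if i = j then s i else 0)
    (hs0 : ∀ i, s i ≠ 0) : LinearIndependent ℝ v := by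
  refine Fintype.linearIndependent_iff.mpr fun c hc j => ?_
  have := apply_sum_smul_left_of_ortho horth c j
  rw [hc, zero_left] at this
  exact (mul_eq_zero.mp this.symm).resolve_right (hs0 j)

theorem eq_sum_smul_of_mem_span_of_ortho
    (horth : ∀ i j, B (v i) (v j) = if i = j then s i else 0) (hs0 : ∀ i, s i ≠ 0) {x : V}
    (hx : x ∈ Submodule.span ℝ (Set.range v)) : x = ∑ i, (B x (v i) / s i) • v i := by
  obtain ⟨c, rfl⟩ := (Submodule.mem_span_range_iff_exists_fun ℝ).mp hx
  simp only [apply_sum_smul_left_of_ortho horth, mul_div_cancel_right₀ _ (hs0 _)]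

theorem sum_sq_apply_div_le_of_ortho (hs : ∀ x, 0 ≤ B x x) (hB : B.IsSymm)
    (horth : ∀ i j, B (v i) (v j) = if i = j then s i else 0) (hs0 : ∀ i, s i ≠ 0) (w : V) :
    ∑ i, B w (v i) ^ 2 / s i ≤ B w w := by
  set p := ∑ i, (B w (v i) / s i) • v i
  have hwp : B w p = ∑ i, B w (v i) ^ 2 / s i := by
    simp only [p, map_sum, map_smul, smul_eq_mul]
    exact sum_congr rfl fun i _ => by ring
  have hpp : B p p = ∑ i, B w (v i) ^ 2 / s i := by
    rw [apply_sum_smul_self_of_ortho horth]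
    exact sum_congr rfl fun i _ => by field_simp [hs0 i]
  have := hs (w - p)
  simp only [map_sub, LinearMap.sub_apply, hB.eq p w, hwp, hpp] at this
  linarith

theorem apply_sum_smul_self_le_of_ortho (hs : ∀ x, 0 ≤ B x x) (hB : B.IsSymm)
    (horth : ∀ i j, B (v i) (v j) = if i = j then s i else 0) (hpos : ∀ i, 0 < s i)
    {c : ι → ℝ} {K : ℝ} {w : V} (hc : ∀ i, (c i * s i) ^ 2 ≤ K ^ 2 * B w (v i) ^ 2) :
    B (∑ i, c i • v i) (∑ i, c i • v i) ≤ K ^ 2 * B w w :=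
  calc B (∑ i, c i • v i) (∑ i, c i • v i) = ∑ i, (c i * s i) ^ 2 / s i := by
        rw [apply_sum_smul_self_of_ortho horth]
        exact sum_congr rfl fun i _ => by field_simp [(hpos i).ne']
    _ ≤ ∑ i, K ^ 2 * B w (v i) ^ 2 / s i := by gcongr with i; exacts [(hpos i).le, hc i]
    _ = K ^ 2 * ∑ i, B w (v i) ^ 2 / s i := by simp only [mul_sum, mul_div_assoc]
    _ ≤ K ^ 2 * B w w := by
        gcongr
        exact sum_sq_apply_div_le_of_ortho hs hB horth (fun i => (hpos i).ne') w

end Orthogonal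

end LinearMap.BilinForm

theorem LinearIndependent.span_range_eq_of_finrank_eq {V : Type*} [AddCommGroup V] [Module ℝ V]
    {ι : Type*} [Fintype ι] [Nonempty ι] {v : ι → V} (hv : LinearIndependent ℝ v)
    {W : Submodule ℝ V} (hmem : ∀ i, v i ∈ W) (hdim : Module.finrank ℝ W = Fintype.card ι) :
    Submodule.span ℝ (Set.range v) = W := by
  have : FiniteDimensional ℝ W := .of_finrank_pos (hdim ▸ Fintype.card_pos)
  exact Submodule.eq_of_le_of_finrank_eq (Submodule.span_le.mpr (Set.range_subset_iff.mpr hmem))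
    (by rw [finrank_span_eq_card hv, hdim])

theorem sq_mul_le_sq_div_mul_sq (x : ℝ) {m μ δ Δ : ℝ} (hm : 0 ≤ m) (hmμ : m ≤ μ) (hδ : 0 < δ)
    (hΔ : δ ≤ |Δ|) : (x * m) ^ 2 ≤ (μ / δ) ^ 2 * (x * Δ) ^ 2 := by
  have hm' : m ≤ μ / δ * |Δ| :=
    calc m ≤ μ := hmμ
      _ ≤ μ / δ * |Δ| := by
        rw [div_mul_eq_mul_div, le_div_iff₀ hδ]
        exact mul_le_mul_of_nonneg_left hΔ (hm.trans hmμ)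
  calc (x * m) ^ 2 = x ^ 2 * m ^ 2 := by ring
    _ ≤ x ^ 2 * (μ / δ * |Δ|) ^ 2 := by gcongr
    _ = (μ / δ) ^ 2 * (x * Δ) ^ 2 := by rw [mul_pow, sq_abs]; ring

section GeneralizedEigenpairs

variable {V : Type*} [AddCommGroup V] [Module ℝ V] {a b : LinearMap.BilinForm ℝ V}
  {N : ℕ} {Vh : Submodule ℝ V} {lamb : Fin N → ℝ} {ub : Fin N → V}

theorem b_eigvec_eigvec_eq (hmem : ∀ j, ub j ∈ Vh) (hpos : ∀ j, lamb j ≠ 0)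
    (heig : ∀ j, ∀ v ∈ Vh, a (ub j) v = lamb j * b (ub j) v)
    (horth : ∀ i j, a (ub i) (ub j) = if i = j then 1 else 0) (i j : Fin N) :
    b (ub i) (ub j) = if i = j then 1 / lamb i else 0 := by
  have := heig i (ub j) (hmem j)
  rw [horth] at this
  split_ifs at this ⊢
  · field_simp [hpos i]
    linarith
  · exact ((mul_eq_zero.mp this.symm).resolve_left (hpos i))

theorem b_sub_proj_eigvec_eq (hasymm : ∀ x y, a x y = a y x) (hbsymm : ∀ x y, b x y = b y x)
    (hmem : ∀ j, ub j ∈ Vh) (hpos : ∀ j, lamb j ≠ 0)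
    (heig : ∀ j, ∀ v ∈ Vh, a (ub j) v = lamb j * b (ub j) v)
    {Ph : V →ₗ[ℝ] V} (hPmem : ∀ w, Ph w ∈ Vh) (hPproj : ∀ w, ∀ vh ∈ Vh, a (Ph w) vh = a w vh)
    {lam : ℝ} (hlam : lam ≠ 0) {u : V} (hu : ∀ v, a u v = lam * b u v) (i : Fin N) :
    b (u - Ph u) (ub i) = a u (ub i) * (1 / lam - 1 / lamb i) := by
  have hbu : b u (ub i) = a u (ub i) / lam := by
    rw [hu, mul_div_cancel_left₀ _ hlam]
  have hbPu : b (Ph u) (ub i) = a u (ub i) / lamb i := by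
    rw [hbsymm, ← hPproj u (ub i) (hmem i), hasymm, heig i _ (hPmem u),
      mul_div_cancel_left₀ _ (hpos i)]
  rw [map_sub, LinearMap.sub_apply, hbu, hbPu]
  ring

theorem a_proj_sub_proj_eigvec_eq (hmem : ∀ j, ub j ∈ Vh)
    (horth : ∀ i j, a (ub i) (ub j) = if i = j then 1 else 0)
    {Ph : V →ₗ[ℝ] V} (hPproj : ∀ w, ∀ vh ∈ Vh, a (Ph w) vh = a w vh) {k : ℕ} {Ek : V →ₗ[ℝ] V}
    (hEmem : ∀ w, Ek w ∈ Submodule.span ℝ (Set.range fun j : {j : Fin N // (j : ℕ) < k} => ub j))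
    (hEproj : ∀ w, ∀ j : Fin N, (j : ℕ) < k → a (Ek w) (ub j) = a w (ub j)) (u : V) (i : Fin N) :
    a (Ph u - Ek u) (ub i) = if (i : ℕ) < k then 0 else a u (ub i) := by
  rw [map_sub, LinearMap.sub_apply, hPproj u _ (hmem i)]
  split_ifs with hik
  · rw [hEproj u i hik, sub_self]
  · have hspan : Submodule.span ℝ (Set.range fun j : {j : Fin N // (j : ℕ) < k} => ub j) ≤
        LinearMap.ker (a.flip (ub i)) := by
      refine Submodule.span_le.mpr (Set.range_subset_iff.mpr fun j => ?_)
      have : (j : Fin N) ≠ i := fun h => hik (h ▸ j.2)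
      simp [horth, this]
    have : a (Ek u) (ub i) = 0 := hspan (hEmem u)
    rw [this, sub_zero]

theorem b_proj_sub_proj_le (hasymm : ∀ x y, a x y = a y x) (hbsymm : ∀ x y, b x y = b y x)
    (hbpos : ∀ x, x ≠ 0 → 0 < b x x) (hmem : ∀ j, ub j ∈ Vh)
    (hspan : Submodule.span ℝ (Set.range ub) = Vh) (hpos : ∀ j, 0 < lamb j)
    (heig : ∀ j, ∀ v ∈ Vh, a (ub j) v = lamb j * b (ub j) v)
    (horth : ∀ i j, a (ub i) (ub j) = if i = j then 1 else 0)
    {Ph : V →ₗ[ℝ] V} (hPmem : ∀ w, Ph w ∈ Vh) (hPproj : ∀ w, ∀ vh ∈ Vh, a (Ph w) vh = a w vh)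
    {k : ℕ} {Ek : V →ₗ[ℝ] V}
    (hEmem : ∀ w, Ek w ∈ Submodule.span ℝ (Set.range fun j : {j : Fin N // (j : ℕ) < k} => ub j))
    (hEproj : ∀ w, ∀ j : Fin N, (j : ℕ) < k → a (Ek w) (ub j) = a w (ub j))
    {lam : ℝ} (hlam : lam ≠ 0) {u : V} (hu : ∀ v, a u v = lam * b u v)
    {μ δ : ℝ} (hμ : ∀ j : Fin N, k ≤ (j : ℕ) → 1 / lamb j ≤ μ) (hδpos : 0 < δ)
    (hδ : ∀ j : Fin N, k ≤ (j : ℕ) → δ ≤ |1 / lamb j - 1 / lam|) :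
    b (Ph u - Ek u) (Ph u - Ek u) ≤ (μ / δ) ^ 2 * b (u - Ph u) (u - Ph u) := by
  have hEk : Ek u ∈ Vh := Submodule.span_le.mpr (by rintro _ ⟨j, rfl⟩; exact hmem j) (hEmem u)
  have he : Ph u - Ek u ∈ Submodule.span ℝ (Set.range ub) := hspan ▸ Vh.sub_mem (hPmem u) hEk
  rw [LinearMap.BilinForm.eq_sum_smul_of_mem_span_of_ortho (s := fun _ => 1) horth
    (fun _ => one_ne_zero) he]
  simp only [div_one]
  refine LinearMap.BilinForm.apply_sum_smul_self_le_of_ortho (s := fun j => 1 / lamb j)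
    (b.apply_self_nonneg_of_pos hbpos) (LinearMap.BilinForm.isSymm_def.mpr hbsymm)
    (b_eigvec_eigvec_eq hmem (fun j => (hpos j).ne') heig horth) (fun j => by simp [hpos j])
    fun i => ?_
  rw [a_proj_sub_proj_eigvec_eq hmem horth hPproj hEmem hEproj,
    b_sub_proj_eigvec_eq hasymm hbsymm hmem (fun j => (hpos j).ne') heig hPmem hPproj hlam hu]
  split_ifs with hik
  · rw [zero_mul, zero_pow two_ne_zero]
    positivity
  · have hki : k ≤ (i : ℕ) := not_lt.mp hik
    exact sq_mul_le_sq_div_mul_sq _ (by simp [(hpos i).le]) (hμ i hki) hδpos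
      (abs_sub_comm (1 / lamb i) (1 / lam) ▸ hδ i hki)

end GeneralizedEigenpairs

/-- b-norm error estimates
`‖u_i − E_k u_i‖_b ≤ (1 + μ̄_{k+1}/δ) η ‖(I − P_h) u_i‖_a` and
`‖u_i − E_k u_i‖_b ≤ (1 + μ̄_{k+1}/δ) η ‖u_i − E_k u_i‖_a`. -/
theorem stmt_9 {V : Type*} [AddCommGroup V] [Module ℝ V]
    (a b : LinearMap.BilinForm ℝ V)
    (hasymm : ∀ x y, a x y = a y x) (hbsymm : ∀ x y, b x y = b y x)
    (hapos : ∀ x, x ≠ 0 → 0 < a x x) (hbpos : ∀ x, x ≠ 0 → 0 < b x x)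
    (N : ℕ) (Vh : Submodule ℝ V) (hdim : Module.finrank ℝ Vh = N)
    (lamb : Fin N → ℝ) (ub : Fin N → V) (hmem : ∀ j, ub j ∈ Vh)
    (hpos : ∀ j, 0 < lamb j) (hmono : Monotone lamb)
    (heig : ∀ j, ∀ v ∈ Vh, a (ub j) v = lamb j * b (ub j) v)
    (horth : ∀ i j, a (ub i) (ub j) = if i = j then 1 else 0)
    (Ph : V →ₗ[ℝ] V) (hPmem : ∀ w, Ph w ∈ Vh)
    (hPproj : ∀ w, ∀ vh ∈ Vh, a (Ph w) vh = a w vh)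
    (k : ℕ) (hk : k < N)
    (Ek : V →ₗ[ℝ] V)
    (hEmem : ∀ w, Ek w ∈ Submodule.span ℝ (Set.range fun j : {j : Fin N // (j : ℕ) < k} => ub j))
    (hEproj : ∀ w, ∀ j : Fin N, (j : ℕ) < k → a (Ek w) (ub j) = a w (ub j))
    (lam : ℝ) (hlam : 0 < lam) (u : V) (hu : ∀ v, a u v = lam * b u v)
    (δ : ℝ)
    (hδdef : δ = (Finset.univ.filter (fun j : Fin N => k ≤ (j : ℕ))).inf'
        ⟨⟨k, hk⟩, by simp⟩ (fun j => |1 / lamb j - 1 / lam|))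
    (hδpos : 0 < δ)
    (η : ℝ) (hηpos : 0 < η)
    (hη : ∀ w : V, Real.sqrt (b (w - Ph w) (w - Ph w)) ≤
        η * Real.sqrt (a (w - Ph w) (w - Ph w))) :
    Real.sqrt (b (u - Ek u) (u - Ek u)) ≤
        (1 + (1 / lamb ⟨k, hk⟩) / δ) * η * Real.sqrt (a (u - Ph u) (u - Ph u)) ∧
      Real.sqrt (b (u - Ek u) (u - Ek u)) ≤
        (1 + (1 / lamb ⟨k, hk⟩) / δ) * η * Real.sqrt (a (u - Ek u) (u - Ek u)) := by
  have : Nonempty (Fin N) := ⟨⟨k, hk⟩⟩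
  have hspan := (LinearMap.BilinForm.linearIndependent_of_ortho (s := fun _ => 1) horth
    fun _ => one_ne_zero).span_range_eq_of_finrank_eq hmem (by rw [hdim, Fintype.card_fin])
  have hμ (j : Fin N) (hj : k ≤ (j : ℕ)) : 1 / lamb j ≤ 1 / lamb ⟨k, hk⟩ :=
    one_div_le_one_div_of_le (hpos _) (hmono (Fin.le_iff_val_le_val.mpr hj))
  have hδ (j : Fin N) (hj : k ≤ (j : ℕ)) : δ ≤ |1 / lamb j - 1 / lam| :=
    hδdef ▸ Finset.inf'_le _ (by simp [hj])
  set K := 1 / lamb ⟨k, hk⟩ / δ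
  have hK : 0 ≤ K := by have := hpos ⟨k, hk⟩; positivity
  have hsplit : u - Ek u = (u - Ph u) + (Ph u - Ek u) := by abel
  have he : Ph u - Ek u ∈ Vh :=
    Vh.sub_mem (hPmem u) (Submodule.span_le.mpr (by rintro _ ⟨j, rfl⟩; exact hmem j) (hEmem u))
  have hfirst : √(b (u - Ek u) (u - Ek u)) ≤ (1 + K) * η * √(a (u - Ph u) (u - Ph u)) :=
    calc √(b (u - Ek u) (u - Ek u)) ≤ (1 + K) * √(b (u - Ph u) (u - Ph u)) := by
          rw [hsplit]
          exact b.sqrt_apply_add_self_le_of_le_sq_mul (b.apply_self_nonneg_of_pos hbpos)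
            (LinearMap.BilinForm.isSymm_def.mpr hbsymm) hK
            (b_proj_sub_proj_le hasymm hbsymm hbpos hmem hspan hpos heig horth hPmem hPproj hEmem
              hEproj hlam.ne' hu hμ hδpos hδ)
      _ ≤ (1 + K) * (η * √(a (u - Ph u) (u - Ph u))) := by gcongr; exact hη u
      _ = (1 + K) * η * √(a (u - Ph u) (u - Ph u)) := (mul_assoc ..).symm
  refine ⟨hfirst, hfirst.trans ?_⟩
  gcongr
  rw [hsplit]
  refine a.apply_self_le_apply_add_self (a.apply_self_nonneg_of_pos hapos)
    (LinearMap.BilinForm.isSymm_def.mpr hasymm) ?_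
  rw [LinearMap.BilinForm.sub_left, hPproj u _ he, sub_self]
end

section
/- Key contraction inequality of the augmented subspace iteration: Let V_h be a finite-dimensional real vector space with positive definite symmetric bilinear forms a and b, and (λ̄, ū) a discrete eigenpair: a(ū, v) = λ̄ b(ū, v) for all v ∈ V_h, λ̄ > 0. Let u⁽ℓ⁾ ∈ V_h with a(u⁽ℓ⁾,u⁽ℓ⁾)=1, λ⁽ℓ⁾ > 0, and let û ∈ V_h solve a(û, v) = λ⁽ℓ⁾ b(u⁽ℓ⁾, v) for all v ∈ V_h. Let W = V_H + span{û} for some subspace V_H ⊆ V_h, let P_W be the a-orthogonal projection of V_h onto W, and suppose ‖(I − P_W)w‖_b ≤ η ‖(I − P_W)w‖_a for all w ∈ V_h with some η > 0. Let π be the b-orthogonal projection onto span{u⁽ℓ⁾}. Then ‖ū − P_W ū‖_a ≤ λ̄ η ‖ū − π ū‖_b. -/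
/-- Cauchy–Schwarz for a positive semidefinite symmetric bilinear form. -/
lemma cs_bilin {V : Type*} [AddCommGroup V] [Module ℝ V]
    (b : LinearMap.BilinForm ℝ V) (hbsymm : ∀ x y, b x y = b y x)
    (hb : ∀ x, 0 ≤ b x x) (x y : V) :
    b x y ≤ Real.sqrt (b x x) * Real.sqrt (b y y) := by
  have hquad : ∀ t : ℝ, 0 ≤ b y y * (t * t) + (2 * b x y) * t + b x x := by
    intro t
    have := hb (x + t • y)
    have hexp : b (x + t • y) (x + t • y)
        = b y y * (t * t) + (2 * b x y) * t + b x x := by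
      simp only [map_add, map_smul, LinearMap.add_apply, LinearMap.smul_apply,
        smul_eq_mul, hbsymm y x]
      ring
    rw [hexp] at this
    linarith
  have hd := discrim_le_zero hquad
  rw [discrim] at hd
  have hsq : (b x y) ^ 2 ≤ b x x * b y y := by nlinarith
  calc b x y ≤ |b x y| := le_abs_self _
    _ = Real.sqrt ((b x y) ^ 2) := (Real.sqrt_sq_eq_abs _).symm
    _ ≤ Real.sqrt (b x x * b y y) := Real.sqrt_le_sqrt hsq
    _ = Real.sqrt (b x x) * Real.sqrt (b y y) := Real.sqrt_mul (hb x) _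

/-- key contraction inequality of the augmented subspace iteration:
with `û` solving `a(û,v) = λ⁽ℓ⁾ b(u⁽ℓ⁾,v)`, `W = V_H + span{û}`, `P_W` the a-orthogonal
projection onto `W`, `η` the dual approximation bound of `W`, and `π` the b-orthogonal
projection onto `span{u⁽ℓ⁾}`, one has `‖ū − P_W ū‖_a ≤ λ̄ η ‖ū − π ū‖_b`. -/
theorem stmt_13 {V : Type*} [AddCommGroup V] [Module ℝ V] [FiniteDimensional ℝ V]
    (a b : LinearMap.BilinForm ℝ V)
    (hasymm : ∀ x y, a x y = a y x) (hbsymm : ∀ x y, b x y = b y x)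
    (hapos : ∀ x, x ≠ 0 → 0 < a x x) (hbpos : ∀ x, x ≠ 0 → 0 < b x x)
    (lamb : ℝ) (hlamb : 0 < lamb) (ub : V)
    (hub : ∀ v, a ub v = lamb * b ub v)
    (ul : V) (hul : a ul ul = 1) (laml : ℝ) (hlaml : 0 < laml)
    (uhat : V) (huhat : ∀ v, a uhat v = laml * b ul v)
    (VH : Submodule ℝ V)
    (W : Submodule ℝ V) (hW : W = VH ⊔ Submodule.span ℝ {uhat})
    (PW : V →ₗ[ℝ] V) (hPmem : ∀ w, PW w ∈ W)
    (hPproj : ∀ w, ∀ wh ∈ W, a (PW w) wh = a w wh)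
    (η : ℝ) (hηpos : 0 < η)
    (hη : ∀ w : V, Real.sqrt (b (w - PW w) (w - PW w)) ≤
        η * Real.sqrt (a (w - PW w) (w - PW w))) :
    Real.sqrt (a (ub - PW ub) (ub - PW ub)) ≤
      lamb * η * Real.sqrt
        (b (ub - (b ub ul / b ul ul) • ul) (ub - (b ub ul / b ul ul) • ul)) := by
  have hbnn : ∀ x : V, 0 ≤ b x x := by
    intro x
    by_cases hx : x = 0
    · simp [hx]
    · exact (hbpos x hx).le
  have hann : ∀ x : V, 0 ≤ a x x := by
    intro x
    by_cases hx : x = 0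
    · simp [hx]
    · exact (hapos x hx).le
  set e : V := ub - PW ub with he
  set c : ℝ := b ub ul / b ul ul with hc
  set d : V := ub - c • ul with hd
  -- e is a-orthogonal to W
  have horth : ∀ wh ∈ W, a e wh = 0 := by
    intro wh hwh
    have := hPproj ub wh hwh
    simp [he, map_sub, LinearMap.sub_apply, this]
  -- uhat ∈ W
  have huhatW : uhat ∈ W := by
    rw [hW]
    exact Submodule.mem_sup_right (Submodule.mem_span_singleton_self uhat)
  -- b ul e = 0
  have hble : b ul e = 0 := by
    have h1 : a e uhat = 0 := horth uhat huhatW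
    have h2 : a uhat e = laml * b ul e := huhat e
    rw [hasymm uhat e, h1] at h2
    rcases mul_eq_zero.mp h2.symm with h | h
    · exact absurd h (ne_of_gt hlaml)
    · exact h
  -- a e e = lamb * b d e
  have hkey : a e e = lamb * b d e := by
    have h1 : a e e = a ub e := by
      have h2 : a e (PW ub) = 0 := horth (PW ub) (hPmem ub)
      have h3 : a (PW ub) e = 0 := by rw [hasymm]; exact h2
      have := LinearMap.BilinForm.sub_left (B₁ := a) ub (PW ub) e
      rw [he, this, h3, sub_zero]
    have h4 : b ub e = b d e := by
      have h5 := LinearMap.BilinForm.sub_left (B₁ := b) ub (c • ul) e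
      have h6 : b (c • ul) e = c * b ul e := LinearMap.BilinForm.smul_left c ul e
      rw [hd, h5, h6, hble, mul_zero, sub_zero]
    rw [h1, hub e, h4]
  -- Cauchy-Schwarz
  have hcs : b d e ≤ Real.sqrt (b d d) * Real.sqrt (b e e) := cs_bilin b hbsymm hbnn d e
  have hηe : Real.sqrt (b e e) ≤ η * Real.sqrt (a e e) := hη ub
  set A : ℝ := Real.sqrt (a e e) with hA
  set B : ℝ := Real.sqrt (b d d) with hB
  have hAnn : 0 ≤ A := Real.sqrt_nonneg _
  have hBnn : 0 ≤ B := Real.sqrt_nonneg _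
  have hAsq : A * A = a e e := Real.mul_self_sqrt (hann e)
  have hmain : A * A ≤ (lamb * η * B) * A := by
    calc A * A = a e e := hAsq
      _ = lamb * b d e := hkey
      _ ≤ lamb * (B * Real.sqrt (b e e)) := by
          apply mul_le_mul_of_nonneg_left hcs hlamb.le
      _ ≤ lamb * (B * (η * A)) := by
          apply mul_le_mul_of_nonneg_left _ hlamb.le
          exact mul_le_mul_of_nonneg_left hηe hBnn
      _ = (lamb * η * B) * A := by ring
  rcases eq_or_lt_of_le hAnn with h0 | h0
  · rw [← h0]
    positivity
  · have := le_of_mul_le_mul_right (by linarith [hmain] : A * A ≤ (lamb * η * B) * A) h0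
    calc A ≤ lamb * η * B := this
      _ = lamb * η * B := rfl
end
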